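/- arXiv:2209.12469 — 3 statements merged into one kernel-verified Lean document; each statement's English description precedes it below -/
import Mathlib

section
/- Let h be a real symmetric 4×4 matrix, H := tr(h)/4, h₀ := h − H·I₄. Define the curvature tensor of a hypersurface via the Gauss equation, R_{ijkl} := h_{ik}h_{jl} − h_{il}h_{jk}, its Ricci contraction Ric_{jl} := Σ_i R_{ijil} (= 4H h_{jl} − (h²)_{jl}), the scalar curvature R := Σ_j Ric_{jj} (= 16H² − tr(h²)), the Schouten tensor P_{ij} := ½( Ric_{ij} − (R/6) δ_{ij} ), and the Weyl tensor W_{ijkl} := R_{ijkl} − ( P_{ik}δ_{jl} − P_{il}δ_{jk} + P_{jl}δ_{ik} − P_{jk}δ_{il} ). Then Σ_{i,j,k,l=1}^{4} (W_{ijkl})² = (7/3)·(tr(h₀²))² − 4·tr(h₀⁴). (This is the identity |W|² = (7/3)|h₀|⁴ − 4 Tr_g(h₀⁴) underlying Theorem I.2, expressed in an orthonormal tangent frame.) -/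
open Matrix

/-- The Kronecker delta on `Fin 4`. -/
def kdelta (i j : Fin 4) : ℝ := if i = j then 1 else 0

set_option maxHeartbeats 4000000 in
/-- **The identity `|W|² = (7/3)|h₀|⁴ − 4 Tr(h₀⁴)` underlying Theorem I.2**, expressed in an
orthonormal tangent frame.  Here `h` is a real symmetric 4×4 matrix (the second fundamental
form), `H := tr h / 4`, `h₀ := h - H • 1`, the curvature tensor is given by the Gauss
equation `R_{ijkl} = h_{ik} h_{jl} - h_{il} h_{jk}`, `Ric` is its Ricci contraction,
`R` the scalar curvature, `P` the Schouten tensor, and `W` the Weyl tensor. -/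
theorem weyl_norm_sq_eq
    (h : Matrix (Fin 4) (Fin 4) ℝ) (hsymm : h.IsSymm)
    (H : ℝ) (hH : H = h.trace / 4)
    (h₀ : Matrix (Fin 4) (Fin 4) ℝ) (hh₀ : h₀ = h - H • (1 : Matrix (Fin 4) (Fin 4) ℝ))
    (Riem : Fin 4 → Fin 4 → Fin 4 → Fin 4 → ℝ)
    (hRiem : ∀ i j k l, Riem i j k l = h i k * h j l - h i l * h j k)
    (Ric : Fin 4 → Fin 4 → ℝ) (hRic : ∀ j l, Ric j l = ∑ i, Riem i j i l)
    (R : ℝ) (hR : R = ∑ j, Ric j j)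
    (P : Fin 4 → Fin 4 → ℝ) (hP : ∀ i j, P i j = (1/2) * (Ric i j - (R / 6) * kdelta i j))
    (W : Fin 4 → Fin 4 → Fin 4 → Fin 4 → ℝ)
    (hW : ∀ i j k l, W i j k l = Riem i j k l -
        (P i k * kdelta j l - P i l * kdelta j k + P j l * kdelta i k - P j k * kdelta i l)) :
    ∑ i, ∑ j, ∑ k, ∑ l, (W i j k l) ^ 2
      = (7/3) * ((h₀ ^ 2).trace) ^ 2 - 4 * (h₀ ^ 4).trace := by
  have hs : ∀ i j : Fin 4, h j i = h i j := fun i j => congrFun (congrFun hsymm i) j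
  have h10 := hs 0 1; have h20 := hs 0 2; have h30 := hs 0 3
  have h21 := hs 1 2; have h31 := hs 1 3; have h32 := hs 2 3
  have e : ∀ i j k l, (W i j k l) ^ 2 = (Riem i j k l) ^ 2
      - 2 * (Riem i j k l * (P i k * kdelta j l - P i l * kdelta j k
            + P j l * kdelta i k - P j k * kdelta i l))
      + (P i k * kdelta j l - P i l * kdelta j k
            + P j l * kdelta i k - P j k * kdelta i l) ^ 2 :=
    fun i j k l => by rw [hW]; ring
  have t2 : (∑ i, ∑ j, ∑ k, ∑ l, Riem i j k l * (P i k * kdelta j l - P i l * kdelta j k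
            + P j l * kdelta i k - P j k * kdelta i l)) = 4 * (∑ i, ∑ j, Ric i j * P i j) := by
    simp only [hRiem, hRic, kdelta, Fin.sum_univ_four, Fin.reduceEq, reduceIte,
      mul_one, mul_zero, zero_mul, one_mul, add_zero, zero_add, sub_zero, zero_sub]
    rw [h10, h20, h30, h21, h31, h32]
    ring
  have t3 : (∑ i, ∑ j, ∑ k, ∑ l, (P i k * kdelta j l - P i l * kdelta j k
            + P j l * kdelta i k - P j k * kdelta i l) ^ 2)
      = 8 * (∑ i, ∑ j, (P i j) ^ 2) + 4 * (∑ i, P i i) ^ 2 := by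
    simp only [kdelta, Fin.sum_univ_four, Fin.reduceEq, reduceIte,
      mul_one, mul_zero, zero_mul, one_mul, add_zero, zero_add, sub_zero, zero_sub]
    ring
  have key : ∑ i, ∑ j, ∑ k, ∑ l, (W i j k l) ^ 2
      = (∑ i, ∑ j, ∑ k, ∑ l, (Riem i j k l) ^ 2)
        - 8 * (∑ i, ∑ j, Ric i j * P i j)
        + 8 * (∑ i, ∑ j, (P i j) ^ 2) + 4 * (∑ i, P i i) ^ 2 := by
    simp only [e, Finset.sum_add_distrib, Finset.sum_sub_distrib, ← Finset.mul_sum]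
    rw [t2, t3]; ring
  rw [key]
  subst hh₀ hH hR
  simp only [hP, hRic, hRiem, kdelta, Matrix.trace, Matrix.diag, Matrix.mul_apply,
    pow_succ, pow_zero, Matrix.one_mul, Matrix.sub_apply, Matrix.smul_apply,
    Matrix.one_apply, smul_eq_mul, Fin.sum_univ_four, Fin.reduceEq, reduceIte,
    mul_one, mul_zero, zero_mul, one_mul, add_zero, zero_add, sub_zero, zero_sub]
  rw [h10, h20, h30, h21, h31, h32]
  ring
end

section
/- Let h be a real symmetric 4×4 matrix, H := tr(h)/4, h₀ := h − H·I₄, and Ric := 4H·h − h². Then ¼ (tr(h²))² − H tr(h³) = ¼ (tr(h₀²))² − ¼ tr(h₀⁴) − ½ H² tr(h²) − 7 H⁴ + ¼ tr(Ric²). (This is identity (II.15) of the paper: ¼|h|⁴ − H Tr_g h³ = ¼|h₀|⁴ − ¼ Tr_g h₀⁴ − ½ H²|h|² − 7H⁴ + ¼ Ric², with Ric the Ricci tensor of a hypersurface with second fundamental form h via the Gauss equation.) -/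
open Matrix

/-- **Identity (II.15).** For a real symmetric 4×4 matrix `h` with `H := tr h / 4`,
`h₀ := h - H • 1`, and `Ric := 4H • h - h²` (the Ricci tensor of a hypersurface with
second fundamental form `h` via the Gauss equation), one has
`¼ (tr h²)² - H tr h³ = ¼ (tr h₀²)² - ¼ tr h₀⁴ - ½ H² tr h² - 7 H⁴ + ¼ tr (Ric²)`. -/
theorem identity_II_15
    (h : Matrix (Fin 4) (Fin 4) ℝ) (hsymm : h.IsSymm)
    (H : ℝ) (hH : H = h.trace / 4)
    (h₀ : Matrix (Fin 4) (Fin 4) ℝ) (hh₀ : h₀ = h - H • (1 : Matrix (Fin 4) (Fin 4) ℝ))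
    (Ric : Matrix (Fin 4) (Fin 4) ℝ) (hRic : Ric = (4 * H) • h - h ^ 2) :
    (1/4) * ((h ^ 2).trace) ^ 2 - H * (h ^ 3).trace
      = (1/4) * ((h₀ ^ 2).trace) ^ 2 - (1/4) * (h₀ ^ 4).trace
        - (1/2) * H ^ 2 * (h ^ 2).trace - 7 * H ^ 4 + (1/4) * (Ric ^ 2).trace := by
  subst hh₀ hRic
  have htr : h.trace = 4 * H := by rw [hH]; ring
  have e2 : ((h - H • (1 : Matrix (Fin 4) (Fin 4) ℝ)) ^ 2)
      = h ^ 2 - (2 * H) • h + (H ^ 2) • (1 : Matrix (Fin 4) (Fin 4) ℝ) := by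
    simp only [pow_two, sub_mul, mul_sub, smul_mul_assoc, mul_smul_comm, one_mul, mul_one,
      smul_smul]
    module
  have e4 : ((h - H • (1 : Matrix (Fin 4) (Fin 4) ℝ)) ^ 4)
      = h ^ 4 - (4 * H) • h ^ 3 + (6 * H ^ 2) • h ^ 2 - (4 * H ^ 3) • h
        + (H ^ 4) • (1 : Matrix (Fin 4) (Fin 4) ℝ) := by
    simp only [show (4:ℕ) = 2+2 from rfl, show (3:ℕ) = 2+1 from rfl, pow_add, pow_one, pow_two]
    simp only [sub_mul, mul_sub, add_mul, mul_add, smul_mul_assoc, mul_smul_comm, one_mul, mul_one,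
      smul_smul, smul_sub, smul_add, sub_smul, add_smul, mul_assoc]
    module
  have eR : ((4 * H) • h - h ^ 2) ^ 2
      = h ^ 4 - (8 * H) • h ^ 3 + (16 * H ^ 2) • h ^ 2 := by
    simp only [show (4:ℕ) = 2+2 from rfl, show (3:ℕ) = 2+1 from rfl, pow_add, pow_one, pow_two]
    simp only [sub_mul, mul_sub, add_mul, mul_add, smul_mul_assoc, mul_smul_comm, one_mul, mul_one,
      smul_smul, smul_sub, smul_add, sub_smul, add_smul, mul_assoc]
    module
  rw [e2, e4, eR]
  simp only [trace_add, trace_sub, trace_smul, trace_one, smul_eq_mul]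
  simp only [Fintype.card_fin, Nat.cast_ofNat, htr]
  ring
end

section
/- Work in ℝ⁵ with its Euclidean inner product. Let v₁,…,v₄ ∈ ℝ⁵ be linearly independent with Gram matrix g_{ab} := ⟨v_a, v_b⟩, inverse (g^{ab}), v^a := Σ_b g^{ab} v_b, and let n ∈ ℝ⁵ be a unit vector orthogonal to v₁,…,v₄. For ℓ : {1,…,4} → ℝ⁵ define P_{pq} := ℓ_p ∧ v_q − ℓ_q ∧ v_p ∈ Λ²ℝ⁵. Then: (i) ⟨n, ℓ_p⟩ = (1/3) Σ_q ⟨P_{pq}, n ∧ v^q⟩ for every p; (ii) Σ_p ⟨ℓ_p, v^p⟩ = (1/6) Σ_{p,q} ⟨P_{pq}, v^p ∧ v^q⟩; (iii) ⟨ℓ_p, v^i⟩ = (1/2) Σ_q ⟨P_{pq}, v^i ∧ v^q⟩ − (1/12) δ_p^i Σ_{s,q} ⟨P_{sq}, v^s ∧ v^q⟩ for all p, i; and consequently ℓ_p = Σ_i [ (1/2) Σ_q ⟨P_{pq}, v^i ∧ v^q⟩ − (1/12) δ_p^i Σ_{s,q} ⟨P_{sq}, v^s ∧ v^q⟩ ]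 v_i + [ (1/3) Σ_q ⟨P_{pq}, n ∧ v^q⟩ ] n, so the linear map ℓ ↦ P = (P_{pq}) is injective. (This is Lemma III.0 of Section III.4: the operator 𝓟 : ℓ⃗ ↦ ℓ⃗ ∧̂ dΦ is algebraically invertible, with the explicit inverse (III.50)–(III.52).) -/
open Matrix

/-- The Gram inner product of the 2-vectors `x ∧ y` and `z ∧ w` in `ℝ⁵`:
`⟨x∧y, z∧w⟩ = ⟨x,z⟩⟨y,w⟩ − ⟨x,w⟩⟨y,z⟩`. -/
def wedgeInner (x y z w : Fin 5 → ℝ) : ℝ :=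
  (x ⬝ᵥ z) * (y ⬝ᵥ w) - (x ⬝ᵥ w) * (y ⬝ᵥ z)

/-- `⟨P_{pq}, z ∧ w⟩` where `P_{pq} := ℓ_p ∧ v_q − ℓ_q ∧ v_p`. -/
def Pinner (ℓ v : Fin 4 → Fin 5 → ℝ) (p q : Fin 4) (z w : Fin 5 → ℝ) : ℝ :=
  wedgeInner (ℓ p) (v q) z w - wedgeInner (ℓ q) (v p) z w

/-- The 2-vector `ℓ_p ∧ v_q − ℓ_q ∧ v_p` as an element of the exterior algebra of `ℝ⁵`. -/
noncomputable def Pwedge (ℓ v : Fin 4 → Fin 5 → ℝ) (p q : Fin 4) :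
    ExteriorAlgebra ℝ (Fin 5 → ℝ) :=
  ExteriorAlgebra.ι ℝ (ℓ p) * ExteriorAlgebra.ι ℝ (v q)
    - ExteriorAlgebra.ι ℝ (ℓ q) * ExteriorAlgebra.ι ℝ (v p)

/-! ### Auxiliary lemmas -/


lemma myDotSum {ι : Type*} (s : Finset ι) (x : Fin 5 → ℝ) (f : ι → Fin 5 → ℝ) :
    x ⬝ᵥ (∑ i ∈ s, f i) = ∑ i ∈ s, x ⬝ᵥ f i := by
  simp only [dotProduct, Finset.sum_apply, Finset.mul_sum]
  exact Finset.sum_comm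

lemma mySumDot {ι : Type*} (s : Finset ι) (x : Fin 5 → ℝ) (f : ι → Fin 5 → ℝ) :
    (∑ i ∈ s, f i) ⬝ᵥ x = ∑ i ∈ s, f i ⬝ᵥ x := by
  rw [dotProduct_comm, myDotSum]
  simp [dotProduct_comm]

/-- The degree-2 alternating map `(x, y) ↦ ⟨x∧y, z∧w⟩`. -/
def altW (z w : Fin 5 → ℝ) : (Fin 5 → ℝ) [⋀^Fin 2]→ₗ[ℝ] ℝ where
  toFun m := wedgeInner (m 0) (m 1) z w
  map_update_add' m i x y := by
    fin_cases i <;>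
      simp [wedgeInner, add_dotProduct, Function.update] <;> ring
  map_update_smul' m i c x := by
    fin_cases i <;>
      simp [wedgeInner, smul_dotProduct, Function.update, smul_eq_mul] <;> ring
  map_eq_zero_of_eq' m i j hm hij := by
    have h01 : m 0 = m 1 := by fin_cases i <;> fin_cases j <;> simp_all
    simp only [wedgeInner, h01]; ring

noncomputable def famW (z w : Fin 5 → ℝ) : ∀ i : ℕ, (Fin 5 → ℝ) [⋀^Fin i]→ₗ[ℝ] ℝ
  | 2 => altW z w
  | _ => 0

/-- The linear functional `⟨·, z∧w⟩` on the exterior algebra. -/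
noncomputable def Fw (z w : Fin 5 → ℝ) : ExteriorAlgebra ℝ (Fin 5 → ℝ) →ₗ[ℝ] ℝ :=
  ExteriorAlgebra.liftAlternating (famW z w)

lemma Fw_ι_mul_ι (z w x y : Fin 5 → ℝ) :
    Fw z w (ExteriorAlgebra.ι ℝ x * ExteriorAlgebra.ι ℝ y) = wedgeInner x y z w := by
  rw [Fw, ExteriorAlgebra.liftAlternating_ι_mul, ExteriorAlgebra.liftAlternating_ι]
  simp [famW, altW]

lemma Fw_Pwedge (ℓ v : Fin 4 → Fin 5 → ℝ) (p q : Fin 4) (z w : Fin 5 → ℝ) :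
    Fw z w (Pwedge ℓ v p q) = Pinner ℓ v p q z w := by
  simp only [Pwedge, Pinner, map_sub, Fw_ι_mul_ι]

/-- **Lemma III.0 of Section III.4**: the operator `𝓟 : ℓ⃗ ↦ ℓ⃗ ∧̂ dΦ` is algebraically
invertible, with the explicit inverse (III.50)–(III.52).  Here `v₁,…,v₄` is a linearly
independent family in `ℝ⁵` with Gram matrix `g`, dual frame `v^a := Σ_b g^{ab} v_b`, and
`n` is a unit normal; `P_{pq} := ℓ_p ∧ v_q − ℓ_q ∧ v_p`. -/
theorem lemma_III_0_invertibility
    (v : Fin 4 → Fin 5 → ℝ) (hv : LinearIndependent ℝ v)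
    (g : Matrix (Fin 4) (Fin 4) ℝ) (hg : ∀ a b, g a b = v a ⬝ᵥ v b)
    (vup : Fin 4 → Fin 5 → ℝ) (hvup : ∀ a, vup a = ∑ b, g⁻¹ a b • v b)
    (n : Fin 5 → ℝ) (hn : n ⬝ᵥ n = 1) (hnv : ∀ a, n ⬝ᵥ v a = 0) :
    (∀ ℓ : Fin 4 → Fin 5 → ℝ,
      -- (i)
      (∀ p, n ⬝ᵥ ℓ p = (1/3) * ∑ q, Pinner ℓ v p q n (vup q))
      -- (ii)
      ∧ (∑ p, ℓ p ⬝ᵥ vup p = (1/6) * ∑ p, ∑ q, Pinner ℓ v p q (vup p) (vup q))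
      -- (iii)
      ∧ (∀ p i, ℓ p ⬝ᵥ vup i
            = (1/2) * ∑ q, Pinner ℓ v p q (vup i) (vup q)
              - (1/12) * (if p = i then (1:ℝ) else 0) * ∑ s, ∑ q, Pinner ℓ v s q (vup s) (vup q))
      -- reconstruction formula
      ∧ (∀ p, ℓ p
            = (∑ i, ((1/2) * ∑ q, Pinner ℓ v p q (vup i) (vup q)
                - (1/12) * (if p = i then (1:ℝ) else 0)
                    * ∑ s, ∑ q, Pinner ℓ v s q (vup s) (vup q)) • v i)
              + ((1/3) * ∑ q, Pinner ℓ v p q n (vup q)) • n))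
    ∧ Function.Injective (fun ℓ : Fin 4 → Fin 5 → ℝ => fun p q : Fin 4 => Pwedge ℓ v p q) := by
  classical
  -- Gram matrix is invertible
  have hker : ∀ c : Fin 4 → ℝ, g.mulVec c = 0 → c = 0 := by
    intro c hc
    have hx : (∑ a, c a • v a) ⬝ᵥ (∑ a, c a • v a) = 0 := by
      rw [myDotSum]
      have : ∀ a, (∑ b, c b • v b) ⬝ᵥ (c a • v a) = c a * g.mulVec c a := by
        intro a
        rw [dotProduct_comm, myDotSum, mulVec, dotProduct, Finset.mul_sum]
        congr 1; ext b
        rw [dotProduct_smul, smul_eq_mul, smul_dotProduct, smul_eq_mul, hg]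
        ring
      rw [Finset.sum_congr rfl fun a _ => this a]
      simp [hc]
    rw [dotProduct_self_eq_zero] at hx
    exact funext (Fintype.linearIndependent_iff.mp hv c hx)
  have hinj : Function.Injective g.mulVec := by
    intro c c' h
    have := hker (c - c') (by rw [Matrix.mulVec_sub, h, sub_self])
    rwa [sub_eq_zero] at this
  have hunit : IsUnit g := Matrix.mulVec_injective_iff_isUnit.mp hinj
  have hgi : g⁻¹ * g = 1 := Matrix.nonsing_inv_mul g ((Matrix.isUnit_iff_isUnit_det g).mp hunit)
  have hig : g * g⁻¹ = 1 := Matrix.mul_nonsing_inv g ((Matrix.isUnit_iff_isUnit_det g).mp hunit)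
  -- duality facts
  have hvvup0 : ∀ a b, v a ⬝ᵥ vup b = if b = a then 1 else 0 := by
    intro a b
    rw [hvup, myDotSum]
    have : ∀ c, v a ⬝ᵥ (g⁻¹ b c • v c) = g⁻¹ b c * g c a := by
      intro c
      rw [dotProduct_smul, smul_eq_mul, hg, dotProduct_comm]
    rw [Finset.sum_congr rfl fun c _ => this c, ← Matrix.mul_apply, hgi, Matrix.one_apply]
  have hvvup : ∀ a b, v a ⬝ᵥ vup b = if a = b then 1 else 0 := by
    intro a b; rw [hvvup0 a b]; exact if_congr eq_comm rfl rfl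
  have hnvup : ∀ a, n ⬝ᵥ vup a = 0 := by
    intro a
    rw [hvup, myDotSum]
    simp [dotProduct_smul, hnv]
  have hvn : ∀ a, v a ⬝ᵥ n = 0 := fun a => by rw [dotProduct_comm]; exact hnv a
  have hvupn : ∀ a, vup a ⬝ᵥ n = 0 := fun a => by rw [dotProduct_comm]; exact hnvup a
  have hvfromvup : ∀ a, v a = ∑ b, g a b • vup b := by
    intro a
    simp only [hvup, Finset.smul_sum, smul_smul]
    rw [Finset.sum_comm]
    have : ∀ c, (∑ b, (g a b * g⁻¹ b c) • v c) = (g * g⁻¹) a c • v c := by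
      intro c
      rw [← Finset.sum_smul, Matrix.mul_apply]
    rw [Finset.sum_congr rfl fun c _ => this c]
    simp [hig, Matrix.one_apply, ite_smul]
  -- every vector orthogonal to the frame is zero
  have hns : n ∉ Submodule.span ℝ (Set.range v) := by
    intro hmem
    let f : (Fin 5 → ℝ) →ₗ[ℝ] ℝ :=
      { toFun := fun x => n ⬝ᵥ x
        map_add' := fun a b => dotProduct_add n a b
        map_smul' := fun c a => by simp [dotProduct_smul] }
    have hle : Submodule.span ℝ (Set.range v) ≤ LinearMap.ker f := by
      rw [Submodule.span_le]
      rintro _ ⟨a, rfl⟩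
      exact hnv a
    have := hle hmem
    simp only [LinearMap.mem_ker] at this
    rw [show f n = n ⬝ᵥ n from rfl, hn] at this
    exact one_ne_zero this
  have hli5 : LinearIndependent ℝ (Fin.cons n v : Fin 5 → Fin 5 → ℝ) := hv.fin_cons hns
  have hspan : Submodule.span ℝ (Set.range (Fin.cons n v : Fin 5 → Fin 5 → ℝ)) = ⊤ := by
    have hcard : Fintype.card (Fin 5) = Module.finrank ℝ (Fin 5 → ℝ) := by simp
    have := (basisOfLinearIndependentOfCardEqFinrank hli5 hcard).span_eq
    rwa [coe_basisOfLinearIndependentOfCardEqFinrank] at this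
  have hzero : ∀ x : Fin 5 → ℝ, (∀ j, x ⬝ᵥ vup j = 0) → x ⬝ᵥ n = 0 → x = 0 := by
    intro x hxvup hxn
    have hxv : ∀ j, x ⬝ᵥ v j = 0 := by
      intro j
      rw [hvfromvup j, myDotSum]
      simp [dotProduct_smul, hxvup]
    have hx : ∀ y : Fin 5 → ℝ, x ⬝ᵥ y = 0 := by
      intro y
      have hy : y ∈ Submodule.span ℝ (Set.range (Fin.cons n v : Fin 5 → Fin 5 → ℝ)) := by
        rw [hspan]; trivial
      induction hy using Submodule.span_induction with
      | mem z hz =>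
          obtain ⟨j, rfl⟩ := hz
          cases j using Fin.cases with
          | zero => simpa using hxn
          | succ j => simpa using hxv j
      | zero => simp
      | add a b _ _ ha hb => rw [dotProduct_add, ha, hb, add_zero]
      | smul c a _ ha => rw [dotProduct_smul, ha, smul_zero]
    have := hx x
    rwa [dotProduct_self_eq_zero] at this
  -- main part
  have main : ∀ ℓ : Fin 4 → Fin 5 → ℝ,
      (∀ p, n ⬝ᵥ ℓ p = (1/3) * ∑ q, Pinner ℓ v p q n (vup q))
      ∧ (∑ p, ℓ p ⬝ᵥ vup p = (1/6) * ∑ p, ∑ q, Pinner ℓ v p q (vup p) (vup q))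
      ∧ (∀ p i, ℓ p ⬝ᵥ vup i
            = (1/2) * ∑ q, Pinner ℓ v p q (vup i) (vup q)
              - (1/12) * (if p = i then (1:ℝ) else 0) * ∑ s, ∑ q, Pinner ℓ v s q (vup s) (vup q))
      ∧ (∀ p, ℓ p
            = (∑ i, ((1/2) * ∑ q, Pinner ℓ v p q (vup i) (vup q)
                - (1/12) * (if p = i then (1:ℝ) else 0)
                    * ∑ s, ∑ q, Pinner ℓ v s q (vup s) (vup q)) • v i)
              + ((1/3) * ∑ q, Pinner ℓ v p q n (vup q)) • n) := by
    intro ℓ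
    have key1 : ∀ p, ∑ q, Pinner ℓ v p q n (vup q) = 3 * (ℓ p ⬝ᵥ n) := by
      intro p
      have e : ∀ q, Pinner ℓ v p q n (vup q)
          = ℓ p ⬝ᵥ n - (if p = q then 1 else 0) * (ℓ q ⬝ᵥ n) := by
        intro q
        simp only [Pinner, wedgeInner, dotProduct_comm n (ℓ p), dotProduct_comm n (ℓ q),
          hvvup, hvn, hnvup]
        split_ifs <;> ring
      rw [Finset.sum_congr rfl fun q _ => e q]
      simp [Finset.sum_sub_distrib, Finset.sum_ite_eq, Finset.mul_sum]
      ring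
    have key3 : ∀ p i, ∑ q, Pinner ℓ v p q (vup i) (vup q)
        = 2 * (ℓ p ⬝ᵥ vup i) + (if p = i then 1 else 0) * (∑ s, ℓ s ⬝ᵥ vup s) := by
      intro p i
      have e : ∀ q, Pinner ℓ v p q (vup i) (vup q)
          = ℓ p ⬝ᵥ vup i - (if q = i then 1 else 0) * (ℓ p ⬝ᵥ vup q)
            - (if p = q then 1 else 0) * (ℓ q ⬝ᵥ vup i)
            + (if p = i then 1 else 0) * (ℓ q ⬝ᵥ vup q) := by
        intro q
        simp only [Pinner, wedgeInner, hvvup]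
        split_ifs <;> ring
      rw [Finset.sum_congr rfl fun q _ => e q]
      simp only [Finset.sum_add_distrib, Finset.sum_sub_distrib, ← Finset.mul_sum,
        ite_mul, one_mul, zero_mul, Finset.sum_ite_eq, Finset.sum_ite_eq', Finset.mem_univ,
        if_true, Finset.sum_const, Finset.card_univ, Fintype.card_fin, nsmul_eq_mul]
      by_cases hpi : p = i <;> simp [hpi] <;> ring
    have key2 : ∑ p, ∑ q, Pinner ℓ v p q (vup p) (vup q)
        = 6 * (∑ s, ℓ s ⬝ᵥ vup s) := by
      have : ∀ p, ∑ q, Pinner ℓ v p q (vup p) (vup q)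
          = 2 * (ℓ p ⬝ᵥ vup p) + (∑ s, ℓ s ⬝ᵥ vup s) := by
        intro p
        rw [key3 p p]
        simp
      rw [Finset.sum_congr rfl fun p _ => this p]
      simp [Finset.sum_add_distrib, ← Finset.mul_sum, Finset.sum_const, Finset.card_univ]
      ring
    have hi : ∀ p, n ⬝ᵥ ℓ p = (1/3) * ∑ q, Pinner ℓ v p q n (vup q) := by
      intro p
      rw [key1, dotProduct_comm]
      ring
    have hii : ∑ p, ℓ p ⬝ᵥ vup p = (1/6) * ∑ p, ∑ q, Pinner ℓ v p q (vup p) (vup q) := by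
      rw [key2]; ring
    have hiii : ∀ p i, ℓ p ⬝ᵥ vup i
        = (1/2) * ∑ q, Pinner ℓ v p q (vup i) (vup q)
          - (1/12) * (if p = i then (1:ℝ) else 0)
              * ∑ s, ∑ q, Pinner ℓ v s q (vup s) (vup q) := by
      intro p i
      rw [key3, key2]
      ring
    refine ⟨hi, hii, hiii, ?_⟩
    intro p
    have recon : ℓ p = (∑ i, (ℓ p ⬝ᵥ vup i) • v i) + (n ⬝ᵥ ℓ p) • n := by
      rw [← sub_eq_zero]
      apply hzero
      · intro j
        rw [sub_dotProduct, add_dotProduct, mySumDot]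
        have : ∀ i, ((ℓ p ⬝ᵥ vup i) • v i) ⬝ᵥ vup j
            = (ℓ p ⬝ᵥ vup i) * (if i = j then 1 else 0) := by
          intro i; rw [smul_dotProduct, smul_eq_mul, hvvup]
        rw [Finset.sum_congr rfl fun i _ => this i]
        simp [smul_dotProduct, hnvup, Finset.sum_ite_eq']
      · rw [sub_dotProduct, add_dotProduct, mySumDot]
        have : ∀ i, ((ℓ p ⬝ᵥ vup i) • v i) ⬝ᵥ n = 0 := by
          intro i; rw [smul_dotProduct, hvn, smul_zero]
        rw [Finset.sum_congr rfl fun i _ => this i]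
        simp [smul_dotProduct, smul_eq_mul, hn, dotProduct_comm n (ℓ p)]
    rw [recon]
    congr 1
    · refine Finset.sum_congr rfl fun i _ => ?_
      rw [← hiii p i]
    · rw [← hi p]
  refine ⟨main, ?_⟩
  intro ℓ ℓ' hP
  have hPin : ∀ p q z w, Pinner ℓ v p q z w = Pinner ℓ' v p q z w := by
    intro p q z w
    have h := congrFun (congrFun hP p) q
    have h2 := congrArg (Fw z w) h
    simpa only [Fw_Pwedge] using h2
  funext p
  rw [((main ℓ).2.2.2) p, ((main ℓ').2.2.2) p]
  simp only [hPin]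
end
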